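/- Let |0_L⟩, |1_L⟩ ∈ ℂ^32 be the Bennett et al. 5-qubit codewords and |Φ⁺⟩ = (|00⟩ + |11⟩)/√2. Then there exists a nonzero constant c ∈ ℂ, independent of α and β, such that for all α, β ∈ ℂ: (⟨Φ⁺|_{u,1} ⊗ ⟨00|_{2,3} ⊗ I_{4,5})(|0⟩_u ⊗ (α|0_L⟩ + β|1_L⟩)_{12345}) = c·(α(−|00⟩ − |11⟩) + β(|01⟩ + |10⟩))_{45}. That is, teleporting the fiducial state |0⟩ over the channel α|0_L⟩ + β|1_L⟩, with Alice's Bell-basis outcome Φ⁺ on qubits (u,1) and Bob's computational-basis outcome |00⟩ on qubits (2,3), leaves qubits 4 and 5 in a two-qubit state from which the secret α|0⟩ + β|1⟩ is recoverable by local operations. -/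
import Mathlib


open Matrix
open scoped ComplexConjugate

/-- Pauli X matrix on a single qubit (basis indexed by `Bool`). -/
noncomputable def pX : Matrix Bool Bool ℂ := Matrix.of fun b c => if b = c then 0 else 1

/-- Pauli Y matrix on a single qubit. -/
noncomputable def pY : Matrix Bool Bool ℂ :=
  Matrix.of fun b c => if b = c then 0 else if b then Complex.I else -Complex.I

/-- Pauli Z matrix on a single qubit. -/
noncomputable def pZ : Matrix Bool Bool ℂ :=
  Matrix.of fun b c => if b = c then (if b then -1 else 1) else 0

/-- Tensor product of single-qubit matrices, as an operator on the `n`-qubit space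
`(Fin n → Bool) → ℂ ≅ ℂ^(2^n)`. -/
noncomputable def tensorOp {n : ℕ} (M : Fin n → Matrix Bool Bool ℂ) :
    Matrix (Fin n → Bool) (Fin n → Bool) ℂ :=
  Matrix.of fun f g => ∏ i, M i (f i) (g i)

/-- The 5-qubit computational basis state `|abcde⟩`. -/
noncomputable def ket5 (a b c d e : Bool) : (Fin 5 → Bool) → ℂ :=
  fun f => if f = ![a, b, c, d, e] then 1 else 0

/-- The Bennett et al. 5-qubit codeword `|0_L⟩`. -/
noncomputable def zeroL : (Fin 5 → Bool) → ℂ :=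
  (1 / 4 : ℂ) •
    (-(ket5 false false false false false) - ket5 true true false false false
      - ket5 false true true false false - ket5 false false true true false
      - ket5 false false false true true - ket5 true false false false true
      + ket5 true false false true false + ket5 true false true false false
      + ket5 false true false false true + ket5 false true false true false
      + ket5 false false true false true + ket5 true true true true false
      + ket5 true true true false true + ket5 true true false true true
      + ket5 true false true true true + ket5 false true true true true)

/-- The Bennett et al. 5-qubit codeword `|1_L⟩ = XXXXX|0_L⟩`. -/
noncomputable def oneL : (Fin 5 → Bool) → ℂ :=
  Matrix.mulVec (tensorOp ![pX, pX, pX, pX, pX]) zeroL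

/-- The Bell state `|Φ⁺⟩ = (|00⟩ + |11⟩)/√2`. -/
noncomputable def phiPlus : Bool → Bool → ℂ := fun u a =>
  if u = a then (((1 / Real.sqrt 2 : ℝ)) : ℂ) else 0

/-- The two-qubit computational basis state `|ab⟩`, as a function of two bits. -/
noncomputable def ket2 (a b : Bool) : Bool → Bool → ℂ := fun d e =>
  if d = a ∧ e = b then 1 else 0

lemma oneL_apply (f : Fin 5 → Bool) : oneL f = zeroL (fun i => !f i) := by
  unfold oneL Matrix.mulVec tensorOp
  rw [show (Matrix.of fun (a b : Fin 5 → Bool) =>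
      ∏ i, (![pX, pX, pX, pX, pX] : Fin 5 → Matrix Bool Bool ℂ) i (a i) (b i)) f ⬝ᵥ zeroL
      = ∑ g, (∏ i, (![pX, pX, pX, pX, pX] : Fin 5 → Matrix Bool Bool ℂ) i (f i) (g i)) * zeroL g
      from rfl]
  rw [Fintype.sum_eq_single (fun i => !f i)]
  · have h : ∀ i : Fin 5, (![pX, pX, pX, pX, pX] : Fin 5 → Matrix Bool Bool ℂ) i (f i) (!f i) = 1 := by
      intro i
      fin_cases i <;> simp [pX]
    simp [h]
  · intro g hg
    have : ∃ i, g i = f i := by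
      by_contra hc
      push_neg at hc
      exact hg (funext fun i => by cases hfi : f i <;> cases hgi : g i <;>
        simp_all [Bool.not_eq] <;> exact absurd hgi (by simpa [hfi] using hc i))
    obtain ⟨i, hi⟩ := this
    apply mul_eq_zero_of_left
    apply Finset.prod_eq_zero (Finset.mem_univ i)
    fin_cases i <;> simp_all [pX]


lemma not_vec5 (a b c d e : Bool) :
    (fun i => !(![a, b, c, d, e] : Fin 5 → Bool) i) = ![!a, !b, !c, !d, !e] := by
  funext i; fin_cases i <;> rfl

lemma ket5_apply (a b c d e p q r s t : Bool) :
    ket5 a b c d e ![p, q, r, s, t]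
      = if p = a ∧ q = b ∧ r = c ∧ s = d ∧ t = e then 1 else 0 := by
  unfold ket5
  congr 1
  simp [funext_iff, Fin.forall_fin_succ]

/-- Teleporting the fiducial `|0⟩` over `α|0_L⟩ + β|1_L⟩`, with Alice's
Bell outcome `Φ⁺` on `(u,1)` and Bob's outcome `|00⟩` on `(2,3)`, leaves qubits 4 and 5 in
`c·(α(−|00⟩ − |11⟩) + β(|01⟩ + |10⟩))` for a fixed nonzero constant `c` independent of
`α, β`. -/
theorem stmt17 :
    ∃ c : ℂ, c ≠ 0 ∧ ∀ α β : ℂ,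
      (fun d e : Bool => ∑ u : Bool, ∑ q1 : Bool, ∑ q2 : Bool, ∑ q3 : Bool,
          conj (phiPlus u q1) * conj (if q2 = false ∧ q3 = false then (1 : ℂ) else 0)
            * ((if u then 0 else 1) * (α • zeroL + β • oneL) ![q1, q2, q3, d, e]))
        = fun d e : Bool =>
          c * (α * (-(ket2 false false d e) - ket2 true true d e)
                + β * (ket2 false true d e + ket2 true false d e)) := by
  refine ⟨(((1 / Real.sqrt 2 : ℝ)) : ℂ) * (1/4), ?_, ?_⟩
  · simp [Real.sqrt_eq_zero']
  intro α β
  funext d e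
  simp only [Fintype.sum_bool, oneL_apply]
  cases d <;> cases e <;>
    simp [phiPlus, oneL_apply, not_vec5, zeroL, ket5_apply, ket2, Pi.add_apply, Pi.smul_apply,
      Pi.sub_apply, Pi.neg_apply, smul_eq_mul] <;> ring
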